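/- arXiv:2502.17102 — 2 statements merged into one kernel-verified Lean document; each statement's English description precedes it below -/
import Mathlib

section
/- Let K be an algebraically closed field of characteristic p > 0, let n be a positive integer and let ζ ∈ K[[t]] be a nonzero power series satisfying the minimality condition with respect to n. Then the set { rescale_ρ ζ : ρ ∈ U_n } has exactly n[:p] elements; equivalently, the map ρ ↦ rescale_ρ ζ is injective on U_n. -/
open scoped Classical

noncomputable section

namespace PaperStmt

/-- The formal partial derivative `∂_i f` of a formal power series in two variables:
its coefficient at a monomial `m` is `(m i + 1)` times the coefficient of `f` at
`m + eᵢ`. -/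
def pderiv (K : Type*) [Field K] (i : Fin 2) (f : MvPowerSeries (Fin 2) K) :
    MvPowerSeries (Fin 2) K :=
  fun m => ((m i + 1 : ℕ) : K) * MvPowerSeries.coeff (m + Finsupp.single i 1) f

/-- The intersection number `I(f,g) := dim_K K[[X,Y]]/(f,g)`. -/
def inum (K : Type*) [Field K] (f g : MvPowerSeries (Fin 2) K) : ℕ :=
  Module.finrank K (MvPowerSeries (Fin 2) K ⧸ Ideal.span {f, g})

/-- The Milnor number `μ(f) := dim_K K[[X,Y]]/(∂_X f, ∂_Y f)`. -/
def milnor (K : Type*) [Field K] (f : MvPowerSeries (Fin 2) K) : ℕ :=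
  inum K (pderiv K 0 f) (pderiv K 1 f)

/-- `ζ ∈ K[[t]]` satisfies the minimality condition with respect to `n`: the only
positive integer dividing both `n` and every element of the support of `ζ` is `1`. -/
def MinimalDenom (K : Type*) [Field K] (n : ℕ) (ζ : PowerSeries K) : Prop :=
  ∀ d : ℕ, d ∣ n → (∀ j : ℕ, PowerSeries.coeff j ζ ≠ 0 → d ∣ j) → d = 1

/-- `b`, `e` are the characteristic data of `ζ` with respect to `n`, with `h` steps:
`e 0 = n`, `b 0 = 0`, for `j < h` the number `b (j+1)` is the least element of the
support of `ζ` not divisible by `e j` and `e (j+1) = gcd (e j) (b (j+1))`;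
the process stops exactly at `h`, i.e. `e h = 1` and `e j ≠ 1` for `j < h`. -/
def CharData (K : Type*) [Field K] (n : ℕ) (ζ : PowerSeries K) (h : ℕ)
    (b e : ℕ → ℕ) : Prop :=
  e 0 = n ∧ b 0 = 0 ∧ (∀ j, j < h → e j ≠ 1) ∧ e h = 1 ∧
  (∀ j, j < h →
    IsLeast {k : ℕ | PowerSeries.coeff k ζ ≠ 0 ∧ ¬ e j ∣ k} (b (j + 1))) ∧
  (∀ j, j < h → e (j + 1) = Nat.gcd (e j) (b (j + 1)))

/-- `expandPS K n φ = φ(t^n)`: the image of `φ` under the (continuous) `K`-algebra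
homomorphism `K[[x]] → K[[t]]` sending `x` to `t^n`. -/
def expandPS (K : Type*) [Field K] (n : ℕ) (φ : PowerSeries K) : PowerSeries K :=
  PowerSeries.mk fun j => if n ∣ j then PowerSeries.coeff (j / n) φ else 0

/-- A polynomial in `Y` with coefficients in `K[[X]]`, viewed as an element
of `K[[X,Y]]`. -/
def polyToMv (K : Type*) [Field K] (q : Polynomial (PowerSeries K)) :
    MvPowerSeries (Fin 2) K :=
  fun m => PowerSeries.coeff (m 0) (q.coeff (m 1))

/-- `f(t^n, ζ(t)) = 0`: the series `ζ` is a root of the polynomial obtained from `f`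
by mapping its coefficients through the `K`-algebra homomorphism `K[[x]] → K[[t]]`
sending `x` to `t^n`. -/
def IsNPRoot (K : Type*) [Field K] (n : ℕ) (f : Polynomial (PowerSeries K))
    (ζ : PowerSeries K) : Prop :=
  ∑ i ∈ Finset.range (f.natDegree + 1), expandPS K n (f.coeff i) * ζ ^ i = 0

/-- `nuFun K n ζ H = H(t^n, ζ(t))`: the image of `H ∈ K[[X,Y]]` under the continuous
`K`-algebra homomorphism `K[[X,Y]] → K[[t]]` sending `X ↦ t^n` and `Y ↦ ζ(t)`
(for `1 ≤ n` and `ζ(0) = 0`). -/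
def nuFun (K : Type*) [Field K] (n : ℕ) (ζ : PowerSeries K)
    (H : MvPowerSeries (Fin 2) K) : PowerSeries K :=
  PowerSeries.mk fun k =>
    ∑ a ∈ Finset.range (k + 1), ∑ c ∈ Finset.range (k + 1),
      if n * a ≤ k then
        MvPowerSeries.coeff (Finsupp.single 0 a + Finsupp.single 1 c) H *
          PowerSeries.coeff (k - n * a) (ζ ^ c)
      else 0

/-- `n[:p] = n · p^{-ν_p(n)}`, the part of `n` coprime to `p`. -/
def coprimePart (p n : ℕ) : ℕ := n / p ^ padicValNat p n

/-
In characteristic `p` the Frobenius is injective, so `ρ ^ n = 1` iff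
`ρ ^ n[:p] = 1`; since `n[:p]` is invertible in `K`, the algebraically closed field `K`
contains exactly `n[:p]` such roots. It remains to see that `ρ ↦ ζ(ρt)` is injective on
them: if `ζ(ρt) = ζ(σt)` then `τ = ρ/σ` satisfies `τ ^ j = 1` for every `j` in the
support of `ζ`, so the order of `τ` divides `n` and the whole support, and minimality
forces it to be `1`.
-/

theorem coprimePart_eq_ordCompl (p n : ℕ) [Fact p.Prime] :
    coprimePart p n = n / p ^ n.factorization p := by
  rw [coprimePart, Nat.factorization_def n Fact.out]

theorem pow_coprimePart_eq_one_iff {R : Type*} [CommRing R] [IsReduced R]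
    (p : ℕ) [Fact p.Prime] [CharP R p] (n : ℕ) (x : R) :
    x ^ coprimePart p n = 1 ↔ x ^ n = 1 := by
  rw [← ExpChar.pow_prime_pow_mul_eq_one_iff p (n.factorization p), coprimePart_eq_ordCompl,
    Nat.ordProj_mul_ordCompl_eq_self]

theorem coprimePart_cast_ne_zero {R : Type*} [AddMonoidWithOne R]
    (p : ℕ) [Fact p.Prime] [CharP R p] {n : ℕ} (hn : n ≠ 0) :
    (coprimePart p n : R) ≠ 0 := by
  rw [Ne, CharP.cast_eq_zero_iff R p, coprimePart_eq_ordCompl]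
  exact Nat.not_dvd_ordCompl Fact.out hn

theorem ncard_setOf_pow_eq_one {K : Type*} [Field K] [IsAlgClosed K] {m : ℕ}
    (hm : (m : K) ≠ 0) : {x : K | x ^ m = 1}.ncard = m := by
  have hm_pos : 0 < m := Nat.pos_of_ne_zero (by rintro rfl; exact hm Nat.cast_zero)
  have : NeZero (m : K) := ⟨hm⟩
  obtain ⟨ω, hω⟩ := HasEnoughRootsOfUnity.exists_primitiveRoot K m
  have hroots : {x : K | x ^ m = 1} = ↑(Polynomial.nthRootsFinset m (1 : K)) := by
    ext x
    simp [Polynomial.mem_nthRootsFinset hm_pos]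
  rw [hroots, Set.ncard_coe_finset, hω.card_nthRootsFinset]

namespace MinimalDenom

variable {K : Type*} [Field K] {n : ℕ} {ζ : PowerSeries K}

theorem eq_one_of_pow_eq_one (hmin : MinimalDenom K n ζ) {τ : K} (hτn : τ ^ n = 1)
    (hτζ : ∀ j, PowerSeries.coeff j ζ ≠ 0 → τ ^ j = 1) : τ = 1 :=
  orderOf_eq_one_iff.mp <| hmin _ (orderOf_dvd_of_pow_eq_one hτn) fun j hj ↦
    orderOf_dvd_of_pow_eq_one (hτζ j hj)

theorem injOn_rescale (hmin : MinimalDenom K n ζ) (hn : n ≠ 0) :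
    Set.InjOn (fun ρ : K ↦ PowerSeries.rescale ρ ζ) {ρ : K | ρ ^ n = 1} := by
  intro ρ hρ σ hσ hρσ
  have hσ0 : σ ≠ 0 := by
    rintro rfl
    exact zero_ne_one ((zero_pow hn).symm.trans hσ)
  refine (div_eq_one_iff_eq hσ0).mp (hmin.eq_one_of_pow_eq_one ?_ fun j hj ↦ ?_)
  · rw [div_pow, hρ, hσ, div_one]
  · have hcoeff := congrArg (PowerSeries.coeff j) hρσ
    simp only [PowerSeries.coeff_rescale] at hcoeff
    rw [div_pow, mul_right_cancel₀ hj hcoeff, div_self (pow_ne_zero j hσ0)]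

end MinimalDenom

theorem statement9_general (K : Type*) [Field K] [IsAlgClosed K]
    (p : ℕ) [Fact p.Prime] [CharP K p]
    (n : ℕ) (hn : 0 < n)
    (ζ : PowerSeries K) (hmin : MinimalDenom K n ζ) :
    Set.ncard ((fun ρ : K => PowerSeries.rescale ρ ζ) '' {ρ : K | ρ ^ n = 1}) =
      coprimePart p n := by
  rw [(hmin.injOn_rescale hn.ne').ncard_image]
  simp_rw [← pow_coprimePart_eq_one_iff p n]
  exact ncard_setOf_pow_eq_one (coprimePart_cast_ne_zero p hn.ne')

/-- In characteristic `p > 0`, a nonzero `ζ ∈ K[[t]]` satisfying the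
minimality condition with respect to `n` has exactly `n[:p]` distinct conjugates
`ζ(ρt)` for `ρ` ranging over the `n`-th roots of unity. -/
theorem statement9 (K : Type*) [Field K] [IsAlgClosed K]
    (p : ℕ) [Fact p.Prime] [CharP K p]
    (n : ℕ) (hn : 0 < n)
    (ζ : PowerSeries K) (hζ : ζ ≠ 0) (hmin : MinimalDenom K n ζ) :
    Set.ncard ((fun ρ : K => PowerSeries.rescale ρ ζ) '' {ρ : K | ρ ^ n = 1}) =
      coprimePart p n :=
  statement9_general K p n hn ζ hmin

end PaperStmt
end
end

section
/- Let K be an algebraically closed field of characteristic p > 0, let n be a positive integer and let ζ ∈ K[[t]] be a nonzero power series satisfying the minimality condition with respect to n, with characteristic data b_j, e_j (1 ≤ j ≤ h). Then for every j ∈ {1,…,h}: (a) the number of ρ ∈ U_n with ord_t( rescale_ρ ζ − ζ ) ≥ b_j equals e_{j−1}[:p] (where ord_t 0 = ∞ is counted as ≥ b_j); (b) the number of ρ ∈ U_n with ord_t( rescale_ρ ζ − ζ ) = b_j equals e_{j−1}[:p] − e_j[:p]. -/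
/-!
The coefficients of `ζ(ρt) − ζ(t)` are `(ρ^k − 1) ζ_k`, so `ord_t(ζ(ρt) − ζ(t)) ≥ b_j` says
that `ρ^k = 1` for every exponent `k < b_j` of the support. The exponents `b_1, …, b_{j-1}`
lie below `b_j`, and every support exponent below `b_j` is a multiple of
`e_{j-1} = gcd(n, b_1, …, b_{j-1})`; hence, for `ρ^n = 1`, the condition is `ρ^{e_{j-1}} = 1`,
and `ord_t = b_j` adds `ρ^{b_j} ≠ 1`, i.e. `ρ^{e_j} ≠ 1`. In characteristic `p` the Frobenius
is injective, so the `e`-th roots of unity are the `e[:p]`-th ones, and there are exactly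
`e[:p]` of those in an algebraically closed field since `p ∤ e[:p]`.
-/

open scoped Classical

noncomputable section

namespace PaperStmt

theorem coprimePart_eq_ordCompl_s13 {p : ℕ} (hp : p.Prime) (m : ℕ) :
    coprimePart p m = ordCompl[p] m := by
  rw [coprimePart, Nat.factorization_def m hp]

theorem pow_eq_one_of_dvd {M : Type*} [Monoid M] {x : M} {a b : ℕ} (hx : x ^ a = 1)
    (hab : a ∣ b) : x ^ b = 1 := by
  obtain ⟨c, rfl⟩ := hab
  rw [pow_mul, hx, one_pow]

section RootsOfUnity

variable {K : Type*} [Field K]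

theorem setOf_pow_eq_one_eq_nthRootsFinset {m : ℕ} (hm : 0 < m) :
    {ρ : K | ρ ^ m = 1} = Polynomial.nthRootsFinset m (1 : K) := by
  ext ρ
  simp [Polynomial.mem_nthRootsFinset hm]

theorem ncard_setOf_pow_eq_one_of_natCast_ne_zero [IsAlgClosed K] {m : ℕ} (hm : (m : K) ≠ 0) :
    {ρ : K | ρ ^ m = 1}.ncard = m := by
  have : NeZero (m : K) := ⟨hm⟩
  obtain ⟨ω, hω⟩ := HasEnoughRootsOfUnity.exists_primitiveRoot K m
  rw [setOf_pow_eq_one_eq_nthRootsFinset (Nat.pos_of_ne_zero fun h ↦ hm (by simp [h])),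
    Set.ncard_coe_finset, hω.card_nthRootsFinset]

theorem pow_eq_one_iff_pow_coprimePart_eq_one (p : ℕ) [Fact p.Prime] [CharP K p] (ρ : K)
    (m : ℕ) : ρ ^ m = 1 ↔ ρ ^ coprimePart p m = 1 := by
  rw [coprimePart_eq_ordCompl_s13 Fact.out]
  conv_lhs => rw [← Nat.ordProj_mul_ordCompl_eq_self m p, mul_comm, pow_mul]
  exact (iterateFrobenius_inj K p _).eq_iff' (map_one _)

theorem ncard_setOf_pow_eq_one_s13 [IsAlgClosed K] (p : ℕ) [Fact p.Prime] [CharP K p] {m : ℕ}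
    (hm : 0 < m) : {ρ : K | ρ ^ m = 1}.ncard = coprimePart p m := by
  simp_rw [pow_eq_one_iff_pow_coprimePart_eq_one p _ m]
  apply ncard_setOf_pow_eq_one_of_natCast_ne_zero
  rw [Ne, CharP.cast_eq_zero_iff K p, coprimePart_eq_ordCompl_s13 Fact.out]
  exact Nat.not_dvd_ordCompl Fact.out hm.ne'

theorem ncard_setOf_pow_eq_one_sdiff [IsAlgClosed K] (p : ℕ) [Fact p.Prime] [CharP K p]
    {m d : ℕ} (hm : 0 < m) (hd : 0 < d) (hdm : d ∣ m) :
    ({ρ : K | ρ ^ m = 1} \ {ρ | ρ ^ d = 1}).ncard = coprimePart p m - coprimePart p d := by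
  have hsub : {ρ : K | ρ ^ d = 1} ⊆ {ρ | ρ ^ m = 1} := fun _ hρ ↦ pow_eq_one_of_dvd hρ hdm
  have hfin : {ρ : K | ρ ^ d = 1}.Finite := by
    rw [setOf_pow_eq_one_eq_nthRootsFinset hd]
    exact Finset.finite_toSet _
  rw [Set.ncard_sdiff hsub hfin,
    ncard_setOf_pow_eq_one_s13 p hm, ncard_setOf_pow_eq_one_s13 p hd]

end RootsOfUnity

section Rescale

open PowerSeries

variable {R : Type*} [CommRing R]

theorem coeff_rescale_sub_self (ρ : R) (ζ : R⟦X⟧) (k : ℕ) :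
    coeff k (rescale ρ ζ - ζ) = (ρ ^ k - 1) * coeff k ζ := by
  rw [map_sub, coeff_rescale]
  ring

variable [NoZeroDivisors R] {ρ : R} {ζ : R⟦X⟧} {b : ℕ}

theorem coeff_rescale_sub_self_eq_zero_iff {k : ℕ} :
    coeff k (rescale ρ ζ - ζ) = 0 ↔ (coeff k ζ ≠ 0 → ρ ^ k = 1) := by
  rw [coeff_rescale_sub_self, mul_eq_zero, sub_eq_zero, or_iff_not_imp_right]

theorem le_order_rescale_sub_self_iff :
    (b : ℕ∞) ≤ (rescale ρ ζ - ζ).order ↔ ∀ k < b, coeff k ζ ≠ 0 → ρ ^ k = 1 := by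
  simp_rw [← coeff_rescale_sub_self_eq_zero_iff]
  refine ⟨fun h k hk ↦ coeff_of_lt_order k (lt_of_lt_of_le (by exact_mod_cast hk) h),
    nat_le_order _ b⟩

theorem order_rescale_sub_self_eq_iff :
    (rescale ρ ζ - ζ).order = b ↔
      (∀ k < b, coeff k ζ ≠ 0 → ρ ^ k = 1) ∧ ρ ^ b ≠ 1 ∧ coeff b ζ ≠ 0 := by
  simp_rw [order_eq_nat, coeff_rescale_sub_self, ne_eq, mul_eq_zero, sub_eq_zero, not_or,
    or_iff_not_imp_right]
  tauto

end Rescale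

namespace CharData

variable {K : Type*} [Field K] {n : ℕ} {ζ : PowerSeries K} {h : ℕ} {b e : ℕ → ℕ}

theorem e_zero (hcd : CharData K n ζ h b e) : e 0 = n :=
  hcd.1

theorem e_succ (hcd : CharData K n ζ h b e) {i : ℕ} (hi : i < h) :
    e (i + 1) = Nat.gcd (e i) (b (i + 1)) :=
  hcd.2.2.2.2.2 i hi

theorem isLeast_b (hcd : CharData K n ζ h b e) {i : ℕ} (hi : i < h) :
    IsLeast {k | PowerSeries.coeff k ζ ≠ 0 ∧ ¬ e i ∣ k} (b (i + 1)) :=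
  hcd.2.2.2.2.1 i hi

theorem e_succ_dvd_e (hcd : CharData K n ζ h b e) {i : ℕ} (hi : i < h) : e (i + 1) ∣ e i :=
  hcd.e_succ hi ▸ Nat.gcd_dvd_left _ _

theorem e_succ_dvd_b (hcd : CharData K n ζ h b e) {i : ℕ} (hi : i < h) :
    e (i + 1) ∣ b (i + 1) :=
  hcd.e_succ hi ▸ Nat.gcd_dvd_right _ _

theorem e_dvd_e_of_le (hcd : CharData K n ζ h b e) {i i' : ℕ} (hii' : i ≤ i') (hi' : i' ≤ h) :
    e i' ∣ e i := by
  induction i', hii' using Nat.le_induction with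
  | base => rfl
  | succ i' _ ih => exact (hcd.e_succ_dvd_e hi').trans (ih (by omega))

theorem e_dvd_n (hcd : CharData K n ζ h b e) {i : ℕ} (hi : i ≤ h) : e i ∣ n :=
  hcd.e_zero ▸ hcd.e_dvd_e_of_le (Nat.zero_le i) hi

theorem e_pos (hcd : CharData K n ζ h b e) (hn : 0 < n) {i : ℕ} (hi : i ≤ h) : 0 < e i :=
  Nat.pos_of_dvd_of_pos (hcd.e_dvd_n hi) hn

theorem coeff_b_ne_zero (hcd : CharData K n ζ h b e) {i : ℕ} (hi : i < h) :
    PowerSeries.coeff (b (i + 1)) ζ ≠ 0 :=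
  (hcd.isLeast_b hi).1.1

theorem not_e_dvd_b (hcd : CharData K n ζ h b e) {i : ℕ} (hi : i < h) : ¬ e i ∣ b (i + 1) :=
  (hcd.isLeast_b hi).1.2

theorem e_dvd_of_lt_b (hcd : CharData K n ζ h b e) {i k : ℕ} (hi : i < h)
    (hk : PowerSeries.coeff k ζ ≠ 0) (hkb : k < b (i + 1)) : e i ∣ k := by
  by_contra hdvd
  exact (hcd.isLeast_b hi).2 ⟨hk, hdvd⟩ |>.not_gt hkb

theorem b_lt_b_of_lt (hcd : CharData K n ζ h b e) {i' i : ℕ} (hi'i : i' < i) (hi : i < h) :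
    b (i' + 1) < b (i + 1) := by
  refine lt_of_le_of_ne ?_ fun heq ↦ hcd.not_e_dvd_b hi ?_
  · refine (hcd.isLeast_b (hi'i.trans hi)).2 ⟨hcd.coeff_b_ne_zero hi, fun h' ↦ ?_⟩
    exact hcd.not_e_dvd_b hi ((hcd.e_dvd_e_of_le hi'i.le hi.le).trans h')
  · exact heq ▸ (hcd.e_dvd_e_of_le hi'i hi.le).trans (hcd.e_succ_dvd_b (hi'i.trans hi))

theorem forall_pow_eq_one_iff (hcd : CharData K n ζ h b e) {ρ : K} (hρ : ρ ^ n = 1) {i : ℕ}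
    (hi : i < h) :
    (∀ k < b (i + 1), PowerSeries.coeff k ζ ≠ 0 → ρ ^ k = 1) ↔ ρ ^ e i = 1 := by
  refine ⟨fun hρb ↦ ?_, fun hρe k hkb hk ↦ ?_⟩
  · induction i with
    | zero => exact hcd.e_zero ▸ hρ
    | succ i ih =>
      rw [hcd.e_succ (by omega), pow_gcd_eq_one]
      refine ⟨ih (by omega) fun k hk ↦ hρb k (hk.trans (hcd.b_lt_b_of_lt i.lt_succ_self hi)), ?_⟩
      exact hρb _ (hcd.b_lt_b_of_lt i.lt_succ_self hi) (hcd.coeff_b_ne_zero (by omega))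
  · exact pow_eq_one_of_dvd hρe (hcd.e_dvd_of_lt_b hi hk hkb)

theorem setOf_le_order_eq (hcd : CharData K n ζ h b e) {i : ℕ} (hi : i < h) :
    {ρ : K | ρ ^ n = 1 ∧ (b (i + 1) : ℕ∞) ≤ (PowerSeries.rescale ρ ζ - ζ).order} =
      {ρ | ρ ^ e i = 1} := by
  ext ρ
  simp only [Set.mem_ofPred_eq, le_order_rescale_sub_self_iff]
  refine ⟨fun ⟨hρ, hρb⟩ ↦ (hcd.forall_pow_eq_one_iff hρ hi).1 hρb, fun hρe ↦ ?_⟩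
  have hρ : ρ ^ n = 1 := pow_eq_one_of_dvd hρe (hcd.e_dvd_n hi.le)
  exact ⟨hρ, (hcd.forall_pow_eq_one_iff hρ hi).2 hρe⟩

theorem setOf_order_eq (hcd : CharData K n ζ h b e) {i : ℕ} (hi : i < h) :
    {ρ : K | ρ ^ n = 1 ∧ (PowerSeries.rescale ρ ζ - ζ).order = b (i + 1)} =
      {ρ | ρ ^ e i = 1} \ {ρ | ρ ^ e (i + 1) = 1} := by
  ext ρ
  simp only [Set.mem_ofPred_eq, Set.mem_sdiff, order_rescale_sub_self_eq_iff,
    hcd.e_succ hi, pow_gcd_eq_one]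
  refine ⟨fun ⟨hρ, hρb, hρb', _⟩ ↦ ?_, fun ⟨hρe, hρb⟩ ↦ ?_⟩
  · exact ⟨(hcd.forall_pow_eq_one_iff hρ hi).1 hρb, fun h' ↦ hρb' h'.2⟩
  · have hρ : ρ ^ n = 1 := pow_eq_one_of_dvd hρe (hcd.e_dvd_n hi.le)
    exact ⟨hρ, (hcd.forall_pow_eq_one_iff hρ hi).2 hρe, fun h' ↦ hρb ⟨hρe, h'⟩,
      hcd.coeff_b_ne_zero hi⟩

end CharData

theorem statement13_general (K : Type*) [Field K] [IsAlgClosed K]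
    (p : ℕ) [Fact p.Prime] [CharP K p]
    (n : ℕ) (hn : 0 < n)
    (ζ : PowerSeries K)
    (h : ℕ) (b e : ℕ → ℕ) (hcd : CharData K n ζ h b e) :
    ∀ j, 1 ≤ j → j ≤ h →
      Set.ncard {ρ : K | ρ ^ n = 1 ∧
          (b j : ℕ∞) ≤ PowerSeries.order (PowerSeries.rescale ρ ζ - ζ)} =
        coprimePart p (e (j - 1)) ∧
      Set.ncard {ρ : K | ρ ^ n = 1 ∧
          PowerSeries.order (PowerSeries.rescale ρ ζ - ζ) = (b j : ℕ∞)} =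
        coprimePart p (e (j - 1)) - coprimePart p (e j) := by
  rintro j hj hjh
  obtain ⟨i, rfl⟩ : ∃ i, j = i + 1 := ⟨j - 1, by omega⟩
  have hi : i < h := by omega
  rw [Nat.add_sub_cancel, hcd.setOf_le_order_eq hi, hcd.setOf_order_eq hi]
  exact ⟨ncard_setOf_pow_eq_one_s13 p (hcd.e_pos hn hi.le),
    ncard_setOf_pow_eq_one_sdiff p (hcd.e_pos hn hi.le) (hcd.e_pos hn hi)
      (hcd.e_succ_dvd_e hi)⟩

/-- counting lemma. In characteristic `p > 0`, for `ζ` nonzero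
satisfying the minimality condition with respect to `n`, with characteristic data
`b_j, e_j`, and for every `j ∈ {1,…,h}`:
(a) the number of `n`-th roots of unity `ρ` with `ord_t(ζ(ρt) − ζ(t)) ≥ b_j`
(with `ord_t 0 = ∞` counted as `≥ b_j`) is `e_{j−1}[:p]`;
(b) the number of those with `ord_t(ζ(ρt) − ζ(t)) = b_j` is `e_{j−1}[:p] − e_j[:p]`. -/
theorem statement13 (K : Type*) [Field K] [IsAlgClosed K]
    (p : ℕ) [Fact p.Prime] [CharP K p]
    (n : ℕ) (hn : 0 < n)
    (ζ : PowerSeries K) (hζ : ζ ≠ 0) (hmin : MinimalDenom K n ζ)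
    (h : ℕ) (b e : ℕ → ℕ) (hcd : CharData K n ζ h b e) :
    ∀ j, 1 ≤ j → j ≤ h →
      Set.ncard {ρ : K | ρ ^ n = 1 ∧
          (b j : ℕ∞) ≤ PowerSeries.order (PowerSeries.rescale ρ ζ - ζ)} =
        coprimePart p (e (j - 1)) ∧
      Set.ncard {ρ : K | ρ ^ n = 1 ∧
          PowerSeries.order (PowerSeries.rescale ρ ζ - ζ) = (b j : ℕ∞)} =
        coprimePart p (e (j - 1)) - coprimePart p (e j) :=
  statement13_general K p n hn ζ h b e hcd

end PaperStmt
end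
end
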